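/- Let V be a completely distributive quantale, (A, α) and (B, β) (U,V)-graphs, and J : A × B → V a V-relation. Put δ(S,x) = sup{ α(𝔵,x) | 𝔵 ∈ UA with S ∈ 𝔵 } and ζ(T,y) = sup{ β(𝔶,y) | 𝔶 ∈ UB with T ∈ 𝔶 }. Call J U-closed if sup_{𝔶 ∈ UB} (UJ)(𝔵,𝔶) ⊗ β(𝔶,y) ≤ sup_{x ∈ A} α(𝔵,x) ⊗ J(x,y) for all 𝔵 ∈ UA, y ∈ B; U-compact if inf_{S ∈ 𝔵} sup_{s ∈ S} J(s,y) ≤ sup_{x ∈ A} α(𝔵,x) ⊗ J(x,y) for all 𝔵 ∈ UA, y ∈ B; and P-closed if (PJ)(S,T) ⊗ ζ(T,y) ≤ sup_{x ∈ A} δ(S,x) ⊗ J(x,y) for all S ⊆ A, T ⊆ B, y ∈ B. Then: (a) if J is U-closed then J is both U-compact and P-closed; (b) conversely, if (A, α) is a (U,V)-category, U(α ∘ J) = (Uα) ∘ (UJ) as V-relations from U(UA) to UB (where U of a V-relation is given by the ultrafilter extension formula and ∘ is composition of V-relations), and J is U-compact and P-closed, then J is U-closed. -/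

import Mathlib

/-- The Barr extension of a `V`-relation `K : X ⇸ Y` to ultrafilters:
`(UK)(𝔛,𝔜) = inf_{σ ∈ 𝔛, τ ∈ 𝔜} sup_{x ∈ σ, y ∈ τ} K(x,y)`. -/
def Urel {V : Type*} [CompleteLattice V] {X Y : Type*} (K : X → Y → V)
    (𝔛 : Ultrafilter X) (𝔜 : Ultrafilter Y) : V :=
  ⨅ σ : Set X, ⨅ _ : σ ∈ 𝔛, ⨅ τ : Set Y, ⨅ _ : τ ∈ 𝔜, ⨆ x ∈ σ, ⨆ y ∈ τ, K x y

/-- The powerset extension of a `V`-relation: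
`(PK)(S,T) = inf_{t ∈ T} sup_{s ∈ S} K(s,t)`. -/
def Prel {V : Type*} [CompleteLattice V] {X Y : Type*} (K : X → Y → V)
    (S : Set X) (T : Set Y) : V :=
  ⨅ t ∈ T, ⨆ s ∈ S, K s t

/-- The closure relation induced by a convergence relation:
`δ(S,x) = sup { α(𝔵,x) | S ∈ 𝔵 }`. -/
def epsComp {V : Type*} [CompleteLattice V] {X : Type*}
    (α : Ultrafilter X → X → V) (S : Set X) (x : X) : V :=
  ⨆ 𝔵 : Ultrafilter X, ⨆ _ : S ∈ 𝔵, α 𝔵 x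

/-!
(a) `U`-compactness is `U`-closedness tested at the principal ultrafilter `ι y`, where
`k ≤ β(ι y, y)`. For `P`-closedness, complete distributivity writes `(PJ)(S,T)` as the join of
`⨅_{t ∈ T} J(f t, t)` over choice functions `f : T → S`; pushing an ultrafilter `𝔶 ∋ T` forward
along `f` gives `𝔷 ∋ S` with `⨅_t J(f t, t) ≤ (UJ)(𝔷,𝔶)`, and `U`-closedness at `𝔷` applies.

(b) Along an ultrafilter, limsup ≤ liminf in a completely distributive lattice. Hence
`(UJ)(𝔵,𝔶) ≤ ⨆_{T ∈ 𝔶} (PJ)(S,T)` for each `S ∈ 𝔵`, and `P`-closedness bounds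
`(UJ)(𝔵,𝔶) ⊗ β(𝔶,y)` by `⨆_{𝔵' ∋ S} R(𝔵')`, where `R(𝔵') = ⨆_x α(𝔵',x) ⊗ J(x,y)`. By
distributivity again, the meet over `S ∈ 𝔵` of these bounds is a join of `⨅_{𝔵' ∈ t} R(𝔵')` over
sets `t` having `𝔵` in their closure in the Stone space `UA`. An ultrafilter `𝔛 ∋ t` converging
to `𝔵` has `μ 𝔛 = 𝔵`, and the composition law, `U`-compactness and the transitivity of `α` bound
`limsup_𝔛 R = (U(α ∘ J))(𝔛, ι y)` by `R(μ 𝔛)`.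
-/

open Filter Set

section CompletelyDistrib

variable {V : Type*} [CompletelyDistribLattice V]

theorem iInf_biSup_le_iSup_biInf {ι α : Type*} (s : ι → Set α) (f : α → V) :
    ⨅ i, ⨆ a ∈ s i, f a ≤ ⨆ (t : Set α) (_ : ∀ i, (s i ∩ t).Nonempty), ⨅ a ∈ t, f a := by
  simp only [fun i => iSup_subtype' (p := (· ∈ s i)) (f := fun a _ => f a), iInf_iSup_eq]
  refine iSup_le fun g => le_iSup₂_of_le (range fun i => (g i : α))
    (fun i => ⟨g i, (g i).2, mem_range_self i⟩) ?_
  exact le_iInf₂ fun _ ⟨i, hi⟩ => hi ▸ iInf_le _ i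

theorem Ultrafilter.limsup_le_liminf {β : Type*} (𝔶 : Ultrafilter β) (g : β → V) :
    limsup g 𝔶 ≤ liminf g 𝔶 := by
  rw [limsup_eq_iInf_iSup, liminf_eq_iSup_iInf, iInf_subtype']
  refine (iInf_biSup_le_iSup_biInf (fun τ : {τ // τ ∈ (𝔶 : Filter β)} => τ.1) g).trans
    (iSup₂_le fun t ht => le_iSup₂_of_le t ?_ le_rfl)
  exact Ultrafilter.frequently_iff_eventually.1 (frequently_iff.2 fun hU => ht ⟨_, hU⟩)

theorem Ultrafilter.exists_bind_id_eq {A : Type*} {𝔵 : Ultrafilter A}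
    {s : Set (Ultrafilter A)} (h : ∀ S ∈ 𝔵, ({𝔵' | S ∈ 𝔵'} ∩ s).Nonempty) :
    ∃ 𝔛 : Ultrafilter (Ultrafilter A), s ∈ 𝔛 ∧ 𝔛.bind id = 𝔵 := by
  have hcl : 𝔵 ∈ closure s := ultrafilterBasis_is_basis.mem_closure_iff.2 <| by
    rintro _ ⟨S, rfl⟩ hS
    exact h S hS
  obtain ⟨𝔛, hs, hlim⟩ := mem_closure_iff_ultrafilter.1 hcl
  exact ⟨𝔛, hs, (ultrafilter_converges_iff.1 hlim).symm⟩

theorem Ultrafilter.iInf_iSup_le_iSup_limsup {A : Type*} (Φ : Ultrafilter A → V)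
    (𝔵 : Ultrafilter A) :
    ⨅ S ∈ 𝔵, ⨆ (𝔵' : Ultrafilter A) (_ : S ∈ 𝔵'), Φ 𝔵' ≤
      ⨆ (𝔛 : Ultrafilter (Ultrafilter A)) (_ : 𝔛.bind id = 𝔵), limsup Φ 𝔛 := by
  rw [iInf_subtype']
  refine (iInf_biSup_le_iSup_biInf (fun S : {S // S ∈ 𝔵} => {𝔵' : Ultrafilter A | S.1 ∈ 𝔵'})
    Φ).trans (iSup₂_le fun t ht => ?_)
  obtain ⟨𝔛, ht𝔛, rfl⟩ := exists_bind_id_eq fun S hS => ht ⟨S, hS⟩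
  refine le_iSup₂_of_le 𝔛 rfl ?_
  calc ⨅ a ∈ t, Φ a ≤ liminf Φ 𝔛 := by
        rw [liminf_eq_iSup_iInf]
        exact le_iSup₂_of_le t ht𝔛 le_rfl
    _ ≤ limsup Φ 𝔛 := liminf_le_limsup

theorem Prel_eq_iSup_iInf {X Y : Type*} (K : X → Y → V) (S : Set X) (T : Set Y) :
    Prel K S T = ⨆ f : T → S, ⨅ t : T, K (f t) t := by
  rw [Prel, iInf_subtype']
  simp only [fun t => iSup_subtype' (p := (· ∈ S)) (f := fun s _ => K s t)]
  rw [iInf_iSup_eq]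

end CompletelyDistrib

section Barr

variable {V : Type*} [CompleteLattice V] {X Y : Type*}

theorem Urel_le (K : X → Y → V) {𝔛 : Ultrafilter X} {𝔜 : Ultrafilter Y}
    {σ : Set X} (hσ : σ ∈ 𝔛) {τ : Set Y} (hτ : τ ∈ 𝔜) :
    Urel K 𝔛 𝔜 ≤ ⨆ x ∈ σ, ⨆ y ∈ τ, K x y :=
  iInf₂_le_of_le σ hσ (iInf₂_le τ hτ)

theorem Urel_pure_right (K : X → Y → V) (𝔛 : Ultrafilter X) (y : Y) :
    Urel K 𝔛 (pure y) = limsup (K · y) 𝔛 := by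
  rw [limsup_eq_iInf_iSup]
  refine le_antisymm (le_iInf₂ fun σ hσ => ?_) (le_iInf₂ fun σ hσ => le_iInf₂ fun τ hτ => ?_)
  · refine (Urel_le K hσ (Ultrafilter.mem_pure.2 rfl : {y} ∈ pure y)).trans ?_
    simp only [mem_singleton_iff, iSup_iSup_eq_left, le_rfl]
  · exact iInf₂_le_of_le σ hσ
      (iSup₂_mono fun x _ => le_iSup₂_of_le y (Ultrafilter.mem_pure.1 hτ) le_rfl)

theorem Urel_le_limsup (K : X → Y → V) {𝔛 : Ultrafilter X} {σ : Set X} (hσ : σ ∈ 𝔛)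
    (𝔜 : Ultrafilter Y) : Urel K 𝔛 𝔜 ≤ limsup (fun y => ⨆ x ∈ σ, K x y) 𝔜 := by
  rw [limsup_eq_iInf_iSup]
  exact le_iInf₂ fun τ hτ => (Urel_le K hσ hτ).trans_eq (iSup₂_comm _)

theorem exists_iInf_le_Urel (K : X → Y → V) {𝔜 : Ultrafilter Y} {T : Set Y} (hT : T ∈ 𝔜)
    (f : T → X) : ∃ 𝔷 : Ultrafilter X, range f ∈ 𝔷 ∧ ⨅ t : T, K (f t) t ≤ Urel K 𝔷 𝔜 := by
  let 𝔜T : Ultrafilter T := 𝔜.comap Subtype.val_injective (by rwa [Subtype.range_val])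
  refine ⟨𝔜T.map f, Ultrafilter.mem_map.2 (univ_mem' mem_range_self), ?_⟩
  refine le_iInf₂ fun σ hσ => le_iInf₂ fun τ hτ => ?_
  obtain ⟨t, hσt, hτt⟩ := Ultrafilter.nonempty_of_mem
    (inter_mem (Ultrafilter.mem_map.1 hσ) (preimage_mem_comap hτ : Subtype.val ⁻¹' τ ∈ 𝔜T))
  exact iInf_le_of_le t (le_iSup₂_of_le (f t) hσt (le_iSup₂_of_le t.1 hτt le_rfl))

end Barr

section Quantale

variable {V : Type*} {A B : Type*}
  (α : Ultrafilter A → A → V) (β : Ultrafilter B → B → V) (J : A → B → V)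

section Definitions

variable [CompleteLattice V] [Mul V]

def IsUClosed : Prop :=
  ∀ (𝔵 : Ultrafilter A) (y : B),
    (⨆ 𝔶 : Ultrafilter B, Urel J 𝔵 𝔶 * β 𝔶 y) ≤ ⨆ x, α 𝔵 x * J x y

def IsUCompact : Prop :=
  ∀ (𝔵 : Ultrafilter A) (y : B),
    (⨅ S : Set A, ⨅ _ : S ∈ 𝔵, ⨆ s ∈ S, J s y) ≤ ⨆ x, α 𝔵 x * J x y

def IsPClosed : Prop :=
  ∀ (S : Set A) (T : Set B) (y : B),
    Prel J S T * epsComp β T y ≤ ⨆ x, epsComp α S x * J x y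

end Definitions

variable {α β J}

section Distrib

variable [CompleteLattice V] [Semigroup V] [IsQuantale V]

theorem iSup_mul_distrib' {ι : Sort*} (f : ι → V) (x : V) : (⨆ i, f i) * x = ⨆ i, f i * x := by
  rw [iSup, sSup_mul_distrib, iSup_range]

theorem mul_iSup_distrib' {ι : Sort*} (f : ι → V) (x : V) : x * ⨆ i, f i = ⨆ i, x * f i := by
  rw [iSup, mul_sSup_distrib, iSup_range]

theorem iSup_epsComp_mul (S : Set A) (g : A → V) :
    ⨆ x, epsComp α S x * g x = ⨆ (𝔵 : Ultrafilter A) (_ : S ∈ 𝔵), ⨆ x, α 𝔵 x * g x := by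
  simp only [epsComp, iSup_mul_distrib']
  exact iSup_comm.trans (iSup_congr fun _ => iSup_comm)

end Distrib

theorem IsUClosed.isUCompact [CompleteLattice V] [Monoid V] [IsQuantale V]
    (hβ : ∀ y : B, 1 ≤ β (pure y) y) (h : IsUClosed α β J) : IsUCompact α J := fun 𝔵 y =>
  calc (⨅ S : Set A, ⨅ _ : S ∈ 𝔵, ⨆ s ∈ S, J s y) = Urel J 𝔵 (pure y) := by
        rw [Urel_pure_right, limsup_eq_iInf_iSup]
        rfl
    _ ≤ Urel J 𝔵 (pure y) * β (pure y) y := le_mul_of_one_le_right' (hβ y)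
    _ ≤ ⨆ 𝔶, Urel J 𝔵 𝔶 * β 𝔶 y := le_iSup (fun 𝔶 => Urel J 𝔵 𝔶 * β 𝔶 y) (pure y)
    _ ≤ ⨆ x, α 𝔵 x * J x y := h 𝔵 y

variable [CompletelyDistribLattice V] [Semigroup V] [IsQuantale V]

theorem IsUClosed.isPClosed (h : IsUClosed α β J) : IsPClosed α β J := by
  intro S T y
  have key (f : T → S) (𝔶 : Ultrafilter B) (hT : T ∈ 𝔶) :
      (⨅ t : T, J (f t) t) * β 𝔶 y ≤ ⨆ x, epsComp α S x * J x y := by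
    obtain ⟨𝔷, hrange, hle⟩ := exists_iInf_le_Urel J hT fun t => (f t : A)
    have hS : S ∈ 𝔷 := mem_of_superset hrange (range_subset_iff.2 fun t => (f t).2)
    calc (⨅ t : T, J (f t) t) * β 𝔶 y ≤ Urel J 𝔷 𝔶 * β 𝔶 y := mul_le_mul_left hle _
      _ ≤ ⨆ 𝔶', Urel J 𝔷 𝔶' * β 𝔶' y := le_iSup (fun 𝔶' => Urel J 𝔷 𝔶' * β 𝔶' y) 𝔶
      _ ≤ ⨆ x, α 𝔷 x * J x y := h 𝔷 y
      _ ≤ ⨆ x, epsComp α S x * J x y :=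
        iSup_mono fun x => mul_le_mul_left (le_iSup₂_of_le 𝔷 hS le_rfl : α 𝔷 x ≤ epsComp α S x) _
  calc Prel J S T * epsComp β T y
      ≤ (⨆ f : T → S, ⨅ t : T, J (f t) t) * ⨆ (𝔶 : Ultrafilter B) (_ : T ∈ 𝔶), β 𝔶 y :=
        mul_le_mul_left (Prel_eq_iSup_iInf J S T).le _
    _ = ⨆ (𝔶 : Ultrafilter B) (_ : T ∈ 𝔶) (f : T → S), (⨅ t : T, J (f t) t) * β 𝔶 y := by
        simp only [iSup_mul_distrib', mul_iSup_distrib']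
    _ ≤ ⨆ x, epsComp α S x * J x y := iSup₂_le fun 𝔶 hT => iSup_le fun f => key f 𝔶 hT

theorem IsPClosed.Urel_mul_le (hp : IsPClosed α β J) {𝔵 : Ultrafilter A} {S : Set A}
    (hS : S ∈ 𝔵) (𝔶 : Ultrafilter B) (y : B) :
    Urel J 𝔵 𝔶 * β 𝔶 y ≤ ⨆ x, epsComp α S x * J x y := by
  have hU : Urel J 𝔵 𝔶 ≤ ⨆ T ∈ 𝔶, Prel J S T :=
    (Urel_le_limsup J hS 𝔶).trans ((𝔶.limsup_le_liminf _).trans_eq liminf_eq_iSup_iInf)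
  calc Urel J 𝔵 𝔶 * β 𝔶 y ≤ (⨆ T ∈ 𝔶, Prel J S T) * β 𝔶 y := mul_le_mul_left hU _
    _ = ⨆ T ∈ 𝔶, Prel J S T * β 𝔶 y := by simp only [iSup_mul_distrib']
    _ ≤ ⨆ x, epsComp α S x * J x y := iSup₂_le fun T hT =>
        (mul_le_mul_right (le_iSup₂_of_le 𝔶 hT le_rfl) _).trans (hp S T y)

theorem IsUCompact.limsup_le_bind
    (hcat : ∀ (𝔛 : Ultrafilter (Ultrafilter A)) (x : A),
      (⨆ 𝔵 : Ultrafilter A, Urel α 𝔛 𝔵 * α 𝔵 x) ≤ α (𝔛.bind id) x)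
    (hcomp : ∀ (𝔛 : Ultrafilter (Ultrafilter A)) (𝔶 : Ultrafilter B),
      Urel (fun 𝔵 y => ⨆ x, α 𝔵 x * J x y) 𝔛 𝔶 = ⨆ 𝔵 : Ultrafilter A, Urel α 𝔛 𝔵 * Urel J 𝔵 𝔶)
    (hc : IsUCompact α J) (𝔛 : Ultrafilter (Ultrafilter A)) (y : B) :
    limsup (fun 𝔵 => ⨆ x, α 𝔵 x * J x y) 𝔛 ≤ ⨆ x, α (𝔛.bind id) x * J x y := by
  rw [← Urel_pure_right (fun 𝔵 y => ⨆ x, α 𝔵 x * J x y), hcomp]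
  refine iSup_le fun 𝔳 => ?_
  have hJ : Urel J 𝔳 (pure y) ≤ ⨆ x, α 𝔳 x * J x y := by
    rw [Urel_pure_right, limsup_eq_iInf_iSup]
    exact hc 𝔳 y
  calc Urel α 𝔛 𝔳 * Urel J 𝔳 (pure y) ≤ Urel α 𝔛 𝔳 * ⨆ x, α 𝔳 x * J x y :=
        mul_le_mul_right hJ _
    _ = ⨆ x, Urel α 𝔛 𝔳 * α 𝔳 x * J x y := by simp only [mul_iSup_distrib', mul_assoc]
    _ ≤ ⨆ x, α (𝔛.bind id) x * J x y := iSup_mono fun x =>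
        mul_le_mul_left ((le_iSup (fun 𝔳 => Urel α 𝔛 𝔳 * α 𝔳 x) 𝔳).trans (hcat 𝔛 x)) _

theorem IsUClosed.of_isUCompact_of_isPClosed
    (hcat : ∀ (𝔛 : Ultrafilter (Ultrafilter A)) (x : A),
      (⨆ 𝔵 : Ultrafilter A, Urel α 𝔛 𝔵 * α 𝔵 x) ≤ α (𝔛.bind id) x)
    (hcomp : ∀ (𝔛 : Ultrafilter (Ultrafilter A)) (𝔶 : Ultrafilter B),
      Urel (fun 𝔵 y => ⨆ x, α 𝔵 x * J x y) 𝔛 𝔶 = ⨆ 𝔵 : Ultrafilter A, Urel α 𝔛 𝔵 * Urel J 𝔵 𝔶)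
    (hc : IsUCompact α J) (hp : IsPClosed α β J) : IsUClosed α β J := by
  intro 𝔵 y
  refine iSup_le fun 𝔶 => ?_
  calc Urel J 𝔵 𝔶 * β 𝔶 y
      ≤ ⨅ S ∈ 𝔵, ⨆ (𝔵' : Ultrafilter A) (_ : S ∈ 𝔵'), ⨆ x, α 𝔵' x * J x y :=
        le_iInf₂ fun S hS => (hp.Urel_mul_le hS 𝔶 y).trans_eq (iSup_epsComp_mul S _)
    _ ≤ ⨆ (𝔛 : Ultrafilter (Ultrafilter A)) (_ : 𝔛.bind id = 𝔵),
          limsup (fun 𝔵' => ⨆ x, α 𝔵' x * J x y) 𝔛 :=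
        Ultrafilter.iInf_iSup_le_iSup_limsup _ 𝔵
    _ ≤ ⨆ x, α 𝔵 x * J x y := iSup₂_le fun 𝔛 h𝔛 => h𝔛 ▸ hc.limsup_le_bind hcat hcomp 𝔛 y

end Quantale

theorem Uclosed_iff_Ucompact_Pclosed_general {V : Type*} [CompletelyDistribLattice V] [Monoid V]
    (hl : ∀ (v : V) (S : Set V), v * sSup S = ⨆ w ∈ S, v * w)
    (hr : ∀ (v : V) (S : Set V), sSup S * v = ⨆ w ∈ S, w * v)
    {A B : Type*}
    (α : Ultrafilter A → A → V)
    (β : Ultrafilter B → B → V) (hβ : ∀ y : B, (1 : V) ≤ β (pure y) y)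
    (J : A → B → V) :
    ((∀ (𝔵 : Ultrafilter A) (y : B),
        (⨆ 𝔶 : Ultrafilter B, Urel J 𝔵 𝔶 * β 𝔶 y) ≤ ⨆ x, α 𝔵 x * J x y) →
      ((∀ (𝔵 : Ultrafilter A) (y : B),
          (⨅ S : Set A, ⨅ _ : S ∈ 𝔵, ⨆ s ∈ S, J s y) ≤ ⨆ x, α 𝔵 x * J x y) ∧
        (∀ (S : Set A) (T : Set B) (y : B),
          Prel J S T * epsComp β T y ≤ ⨆ x, epsComp α S x * J x y))) ∧
    ((∀ (𝔛 : Ultrafilter (Ultrafilter A)) (x : A),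
        (⨆ 𝔵 : Ultrafilter A, Urel α 𝔛 𝔵 * α 𝔵 x) ≤ α (𝔛.bind id) x) →
      (∀ (𝔛 : Ultrafilter (Ultrafilter A)) (𝔶 : Ultrafilter B),
        Urel (fun 𝔵 y => ⨆ x, α 𝔵 x * J x y) 𝔛 𝔶 =
          ⨆ 𝔵 : Ultrafilter A, Urel α 𝔛 𝔵 * Urel J 𝔵 𝔶) →
      (∀ (𝔵 : Ultrafilter A) (y : B),
        (⨅ S : Set A, ⨅ _ : S ∈ 𝔵, ⨆ s ∈ S, J s y) ≤ ⨆ x, α 𝔵 x * J x y) →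
      (∀ (S : Set A) (T : Set B) (y : B),
        Prel J S T * epsComp β T y ≤ ⨆ x, epsComp α S x * J x y) →
      ∀ (𝔵 : Ultrafilter A) (y : B),
        (⨆ 𝔶 : Ultrafilter B, Urel J 𝔵 𝔶 * β 𝔶 y) ≤ ⨆ x, α 𝔵 x * J x y) :=
  have : IsQuantale V := ⟨hl, fun S v => hr v S⟩
  ⟨fun hU => ⟨IsUClosed.isUCompact hβ hU, IsUClosed.isPClosed hU⟩,
    fun hcat hcomp hc hp => IsUClosed.of_isUCompact_of_isPClosed hcat hcomp hc hp⟩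

/-- **Theorem 6.6(b)** of the paper and its converse: for `(U,V)`-graphs
`(A,α)`, `(B,β)` and a `V`-relation `J : A ⇸ B`, if `J` is `U`-closed then `J`
is `U`-compact and `P`-closed; conversely if `(A,α)` is a `(U,V)`-category,
`U(α ∘ J) = Uα ∘ UJ` and `J` is `U`-compact and `P`-closed then `J` is
`U`-closed. -/
theorem Uclosed_iff_Ucompact_Pclosed {V : Type*} [CompletelyDistribLattice V] [Monoid V]
    (hl : ∀ (v : V) (S : Set V), v * sSup S = ⨆ w ∈ S, v * w)
    (hr : ∀ (v : V) (S : Set V), sSup S * v = ⨆ w ∈ S, w * v)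
    {A B : Type*}
    (α : Ultrafilter A → A → V) (hα : ∀ x : A, (1 : V) ≤ α (pure x) x)
    (β : Ultrafilter B → B → V) (hβ : ∀ y : B, (1 : V) ≤ β (pure y) y)
    (J : A → B → V) :
    ((∀ (𝔵 : Ultrafilter A) (y : B),
        (⨆ 𝔶 : Ultrafilter B, Urel J 𝔵 𝔶 * β 𝔶 y) ≤ ⨆ x, α 𝔵 x * J x y) →
      ((∀ (𝔵 : Ultrafilter A) (y : B),
          (⨅ S : Set A, ⨅ _ : S ∈ 𝔵, ⨆ s ∈ S, J s y) ≤ ⨆ x, α 𝔵 x * J x y) ∧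
        (∀ (S : Set A) (T : Set B) (y : B),
          Prel J S T * epsComp β T y ≤ ⨆ x, epsComp α S x * J x y))) ∧
    ((∀ (𝔛 : Ultrafilter (Ultrafilter A)) (x : A),
        (⨆ 𝔵 : Ultrafilter A, Urel α 𝔛 𝔵 * α 𝔵 x) ≤ α (𝔛.bind id) x) →
      (∀ (𝔛 : Ultrafilter (Ultrafilter A)) (𝔶 : Ultrafilter B),
        Urel (fun 𝔵 y => ⨆ x, α 𝔵 x * J x y) 𝔛 𝔶 =
          ⨆ 𝔵 : Ultrafilter A, Urel α 𝔛 𝔵 * Urel J 𝔵 𝔶) →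
      (∀ (𝔵 : Ultrafilter A) (y : B),
        (⨅ S : Set A, ⨅ _ : S ∈ 𝔵, ⨆ s ∈ S, J s y) ≤ ⨆ x, α 𝔵 x * J x y) →
      (∀ (S : Set A) (T : Set B) (y : B),
        Prel J S T * epsComp β T y ≤ ⨆ x, epsComp α S x * J x y) →
      ∀ (𝔵 : Ultrafilter A) (y : B),
        (⨆ 𝔶 : Ultrafilter B, Urel J 𝔵 𝔶 * β 𝔶 y) ≤ ⨆ x, α 𝔵 x * J x y) :=
  Uclosed_iff_Ucompact_Pclosed_general hl hr α β hβ J
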